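/- arXiv:1008.5356 — 10 statements merged into one kernel-verified Lean document; each statement's English description precedes it below -/
import Mathlib

section
/- Let r > 0 and 0 < p ≤ 1 be real numbers. For every finite family of real numbers p_1, …, p_t satisfying 0 ≤ p_i ≤ p for all i and ∑_{i=1}^t p_i ≤ r, one has ∏_{i=1}^t (1 - p_i) ≥ (1-p)^{⌊r/p⌋} · (1 - (r - ⌊r/p⌋·p)), where ⌊·⌋ denotes the floor function. -/
open Finset

noncomputable def etaF (p s : ℝ) : ℝ :=
  (1 - p) ^ (⌊s / p⌋₊) * (1 - (s - (⌊s / p⌋₊ : ℝ) * p))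

lemma floor_mul_le (p s : ℝ) (hp0 : 0 < p) (hs : 0 ≤ s) :
    (⌊s / p⌋₊ : ℝ) * p ≤ s := by
  have h := Nat.floor_le (div_nonneg hs hp0.le)
  calc (⌊s / p⌋₊ : ℝ) * p ≤ (s / p) * p := by nlinarith
    _ = s := by field_simp

lemma lt_floor_succ_mul (p s : ℝ) (hp0 : 0 < p) :
    s < ((⌊s / p⌋₊ : ℝ) + 1) * p := by
  have h := Nat.lt_floor_add_one (s / p)
  calc s = (s / p) * p := by field_simp
    _ < ((⌊s / p⌋₊ : ℝ) + 1) * p := by nlinarith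

lemma etaF_nonneg (p s : ℝ) (hp0 : 0 < p) (hp1 : p ≤ 1) (hs : 0 ≤ s) :
    0 ≤ etaF p s := by
  have h1 := floor_mul_le p s hp0 hs
  have h2 := lt_floor_succ_mul p s hp0
  have : (0:ℝ) ≤ (1 - p) ^ (⌊s / p⌋₊) := pow_nonneg (by linarith) _
  have : 1 - (s - (⌊s / p⌋₊ : ℝ) * p) ≥ 0 := by nlinarith
  unfold etaF; positivity

lemma etaF_ge_pow (p s : ℝ) (hp0 : 0 < p) (hp1 : p ≤ 1) (hs : 0 ≤ s) :
    (1 - p) ^ (⌊s / p⌋₊ + 1) ≤ etaF p s := by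
  have h2 := lt_floor_succ_mul p s hp0
  have hnn : (0:ℝ) ≤ (1 - p) ^ (⌊s / p⌋₊) := pow_nonneg (by linarith) _
  have : (1 - p) ≤ 1 - (s - (⌊s / p⌋₊ : ℝ) * p) := by nlinarith
  calc (1 - p) ^ (⌊s / p⌋₊ + 1) = (1 - p) ^ (⌊s / p⌋₊) * (1 - p) := by ring
    _ ≤ etaF p s := by unfold etaF; nlinarith

lemma floor_eq_of_bounds (p s : ℝ) (hp0 : 0 < p) (hs : 0 ≤ s) (n : ℕ)
    (h1 : (n : ℝ) * p ≤ s) (h2 : s < ((n : ℝ) + 1) * p) : ⌊s / p⌋₊ = n := by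
  rw [Nat.floor_eq_iff (div_nonneg hs hp0.le)]
  constructor
  · rw [le_div_iff₀ hp0]; linarith
  · rw [div_lt_iff₀ hp0]; push_cast; linarith

lemma etaF_step (p s q : ℝ) (hp0 : 0 < p) (hp1 : p ≤ 1) (hs : 0 ≤ s)
    (hq0 : 0 ≤ q) (hqp : q ≤ p) :
    etaF p (s + q) ≤ (1 - q) * etaF p s := by
  set n := ⌊s / p⌋₊ with hn
  have h1 := floor_mul_le p s hp0 hs
  have h2 := lt_floor_succ_mul p s hp0
  set f := s - (n : ℝ) * p with hf
  have hf0 : 0 ≤ f := by simp [hf]; linarith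
  have hfp : f < p := by simp [hf]; nlinarith
  have hpow : (0:ℝ) ≤ (1 - p) ^ n := pow_nonneg (by linarith) _
  by_cases hc : f + q < p
  · -- same floor
    have hfl : ⌊(s + q) / p⌋₊ = n := by
      apply floor_eq_of_bounds p _ hp0 (by linarith) n (by linarith)
      push_cast; nlinarith
    unfold etaF
    rw [hfl, ← hn]
    have : 1 - (s + q - (n:ℝ) * p) = 1 - f - q := by rw [hf]; ring
    rw [this]
    have key : (1 - f - q) ≤ (1 - q) * (1 - f) := by nlinarith
    have : 1 - (s - (n:ℝ)*p) = 1 - f := by rw [hf]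
    rw [this]
    calc (1 - p) ^ n * (1 - f - q) ≤ (1 - p) ^ n * ((1 - q) * (1 - f)) := by nlinarith
      _ = (1 - q) * ((1 - p) ^ n * (1 - f)) := by ring
  · -- floor goes up by one
    push_neg at hc
    have hfl : ⌊(s + q) / p⌋₊ = n + 1 := by
      apply floor_eq_of_bounds p _ hp0 (by linarith) (n+1)
      · push_cast; nlinarith
      · push_cast; nlinarith
    unfold etaF
    rw [hfl, ← hn]
    have e1 : 1 - (s + q - ((n:ℝ)+1) * p) = 1 - (f + q - p) := by rw [hf]; ring
    have e2 : 1 - (s - (n:ℝ)*p) = 1 - f := by rw [hf]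
    push_cast
    rw [e1, e2]
    have key : (1 - p) * (1 - (f + q - p)) ≤ (1 - q) * (1 - f) := by nlinarith
    calc (1 - p) ^ (n+1) * (1 - (f + q - p))
        = (1 - p) ^ n * ((1 - p) * (1 - (f + q - p))) := by ring
      _ ≤ (1 - p) ^ n * ((1 - q) * (1 - f)) := by nlinarith
      _ = (1 - q) * ((1 - p) ^ n * (1 - f)) := by ring

lemma etaF_anti (p s r : ℝ) (hp0 : 0 < p) (hp1 : p ≤ 1) (hs : 0 ≤ s)
    (hsr : s ≤ r) : etaF p r ≤ etaF p s := by
  have hr : 0 ≤ r := le_trans hs hsr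
  set n := ⌊s / p⌋₊ with hn
  set m := ⌊r / p⌋₊ with hm
  have hnm : n ≤ m := Nat.floor_le_floor (by gcongr)
  rcases eq_or_lt_of_le hnm with heq | hlt
  · -- same floor: compare fractional parts
    have h1 := floor_mul_le p r hp0 hr
    have h2 := lt_floor_succ_mul p r hp0
    have hpow : (0:ℝ) ≤ (1 - p) ^ n := pow_nonneg (by linarith) _
    unfold etaF
    rw [← hn, ← hm, ← heq]
    have : 1 - (r - (n:ℝ)*p) ≤ 1 - (s - (n:ℝ)*p) := by linarith
    have hnn : 0 ≤ 1 - (r - (n:ℝ)*p) := by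
      rw [heq]; nlinarith
    nlinarith
  · -- m ≥ n + 1 : etaF p r ≤ (1-p)^m ≤ (1-p)^(n+1) ≤ etaF p s
    have h1 := floor_mul_le p r hp0 hr
    have hub : etaF p r ≤ (1 - p) ^ m := by
      unfold etaF
      rw [← hm]
      have hpow : (0:ℝ) ≤ (1 - p) ^ m := pow_nonneg (by linarith) _
      nlinarith
    have hmid : (1 - p) ^ m ≤ (1 - p) ^ (n + 1) :=
      pow_le_pow_of_le_one (by linarith) (by linarith) hlt
    have hlb := etaF_ge_pow p s hp0 hp1 hs
    rw [← hn] at hlb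
    linarith

lemma prod_ge_etaF {ι : Type*} (p : ℝ) (hp0 : 0 < p) (hp1 : p ≤ 1)
    (S : Finset ι) (q : ι → ℝ) (hq0 : ∀ i, 0 ≤ q i) (hqp : ∀ i, q i ≤ p) :
    etaF p (∑ i ∈ S, q i) ≤ ∏ i ∈ S, (1 - q i) := by
  induction S using Finset.cons_induction with
  | empty =>
    simp [etaF, Nat.floor_eq_zero.2 (by rw [zero_div]; norm_num : (0:ℝ)/p < 1)]
  | cons a S ha ih =>
    rw [Finset.sum_cons, Finset.prod_cons]
    have hsum0 : 0 ≤ ∑ i ∈ S, q i := Finset.sum_nonneg fun i _ => hq0 i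
    have step := etaF_step p (∑ i ∈ S, q i) (q a) hp0 hp1 hsum0 (hq0 a) (hqp a)
    have h1q : 0 ≤ 1 - q a := by linarith [hqp a, hp1]
    have hnn := etaF_nonneg p (∑ i ∈ S, q i) hp0 hp1 hsum0
    calc etaF p (q a + ∑ i ∈ S, q i) = etaF p ((∑ i ∈ S, q i) + q a) := by ring_nf
      _ ≤ (1 - q a) * etaF p (∑ i ∈ S, q i) := step
      _ ≤ (1 - q a) * ∏ i ∈ S, (1 - q i) := by nlinarith

/-- Lower-bound half of Lemma `eta`: for `r > 0`, `0 < p ≤ 1`, and any finite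
family `q i ∈ [0, p]` with `∑ q i ≤ r`, one has
`∏ (1 - q i) ≥ (1-p)^⌊r/p⌋ · (1 - (r - ⌊r/p⌋·p))`. -/
theorem stmt_0 (r p : ℝ) (hr : 0 < r) (hp0 : 0 < p) (hp1 : p ≤ 1)
    (t : ℕ) (q : Fin t → ℝ) (hq0 : ∀ i, 0 ≤ q i) (hqp : ∀ i, q i ≤ p)
    (hsum : ∑ i, q i ≤ r) :
    ∏ i, (1 - q i) ≥
      (1 - p) ^ (⌊r / p⌋₊) * (1 - (r - (⌊r / p⌋₊ : ℝ) * p)) := by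
  have hsum0 : 0 ≤ ∑ i, q i := Finset.sum_nonneg fun i _ => hq0 i
  have h1 := prod_ge_etaF p hp0 hp1 Finset.univ q hq0 hqp
  have h2 := etaF_anti p (∑ i, q i) r hp0 hp1 hsum0 hsum
  have : etaF p r = (1 - p) ^ (⌊r / p⌋₊) * (1 - (r - (⌊r / p⌋₊ : ℝ) * p)) := rfl
  linarith
end

section
/- Let r > 0 and 0 < p ≤ 1 be real numbers. Then (1-p)^{⌊r/p⌋} · (1 - (r - ⌊r/p⌋·p)) ≥ (1-p)^{r/p}, where ⌊·⌋ denotes the floor function and (1-p)^{r/p} is interpreted as a real power (equal to 0 when p = 1). -/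
/-- Final inequality of Lemma `eta`:
`(1-p)^⌊r/p⌋ · (1 - (r - ⌊r/p⌋·p)) ≥ (1-p)^(r/p)`, where the right-hand side
is a real (rpow) power (equal to `0` when `p = 1`). -/
theorem stmt_1 (r p : ℝ) (hr : 0 < r) (hp0 : 0 < p) (hp1 : p ≤ 1) :
    (1 - p) ^ (⌊r / p⌋₊) * (1 - (r - (⌊r / p⌋₊ : ℝ) * p)) ≥
      (1 - p) ^ (r / p : ℝ) := by
  set n := ⌊r / p⌋₊ with hn
  have hrp : 0 ≤ r / p := le_of_lt (div_pos hr hp0)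
  have hfl : (n : ℝ) ≤ r / p := Nat.floor_le hrp
  have hfl' : r / p < n + 1 := Nat.lt_floor_add_one _
  -- b = r - n p ∈ [0, p)
  have hb0 : 0 ≤ r - n * p := by
    have := mul_le_mul_of_nonneg_right hfl hp0.le
    rw [div_mul_cancel₀ _ hp0.ne'] at this
    linarith
  have hbp : r - n * p < p := by
    have := mul_lt_mul_of_pos_right hfl' hp0
    rw [div_mul_cancel₀ _ hp0.ne'] at this
    nlinarith
  have h1p : 0 ≤ 1 - p := by linarith
  rcases eq_or_lt_of_le hp1 with rfl | hplt
  · -- p = 1 : RHS = 0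
    have : (0:ℝ) ^ (r / 1 : ℝ) = 0 := by
      rw [Real.zero_rpow]; positivity
    simp only [sub_self] at *
    rw [this]
    rcases Nat.eq_zero_or_pos n with h0 | hpos
    · rw [h0]; simp [h0] at hbp ⊢; nlinarith
    · rw [zero_pow (by omega)]; simp
  · -- p < 1
    have hx0 : (0:ℝ) < 1 - p := by linarith
    -- rewrite RHS: (1-p)^(r/p) = (1-p)^n * (1-p)^(r/p - n)
    have hsplit : (1 - p) ^ (r / p : ℝ)
        = (1 - p) ^ n * (1 - p) ^ (r / p - n : ℝ) := by
      rw [← Real.rpow_natCast (1 - p) n, ← Real.rpow_add hx0]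
      ring_nf
    rw [hsplit]
    apply mul_le_mul_of_nonneg_left _ (pow_nonneg h1p n)
    -- (1-p)^(t) ≤ 1 - t*p with t = r/p - n ∈ [0,1)
    set t : ℝ := r / p - n with ht
    have ht0 : 0 ≤ t := by rw [ht]; linarith
    have ht1 : t ≤ 1 := by rw [ht]; linarith
    have key : (1 - p) ^ (t : ℝ) ≤ 1 + t * (-p) := by
      have := rpow_one_add_le_one_add_mul_self (s := -p) (by linarith) ht0 ht1
      simpa [sub_eq_add_neg] using this
    have htp : t * p = r - n * p := by
      field_simp [ht]
      rw [ht, sub_mul, div_mul_cancel₀ _ hp0.ne']; ring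
    calc (1 - p) ^ (t : ℝ) ≤ 1 + t * (-p) := key
      _ = 1 - (r - n * p) := by rw [← htp]; ring
end

section
/- Let F be a finite set, let e be an element not in F, and let p : F → [0,1]. Choose a linear ordering σ of F ∪ {e} uniformly at random, and let B(e,σ) denote the set of elements of F that precede e in σ. Then E_σ[ ∏_{f ∈ B(e,σ)} (1 - p_f) ] = ∫_0^1 ∏_{f ∈ F} (1 - x·p_f) dx, where an empty product equals 1. -/
open Finset

/-- Counting lemma: the number of bijections `σ : β ≃ Fin m` under which every
element of `t` precedes `emax` is `1/(|t|+1)` of all bijections. -/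
lemma count_precede {β : Type*} [Fintype β] [DecidableEq β] (m : ℕ) (t : Finset β)
    (emax : β) (hemax : emax ∉ t) :
    ((t.card : ℝ) + 1) * ∑ σ : β ≃ Fin m, (if ∀ f ∈ t, σ f < σ emax then (1 : ℝ) else 0)
      = Fintype.card (β ≃ Fin m) := by
  classical
  set T : Finset β := insert emax t with hT
  have hTne : T.Nonempty := ⟨emax, mem_insert_self _ _⟩
  -- for each σ, exactly one u ∈ T is the σ-maximum
  have step1 : ∀ σ : β ≃ Fin m,
      (∑ u ∈ T, (if ∀ v ∈ T, v ≠ u → σ v < σ u then (1 : ℝ) else 0)) = 1 := by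
    intro σ
    obtain ⟨u0, hu0T, hu0⟩ := Finset.exists_max_image T (fun v => σ v) hTne
    rw [Finset.sum_eq_single_of_mem u0 hu0T]
    · rw [if_pos]
      intro v hv hne
      exact lt_of_le_of_ne (hu0 v hv) (fun h => hne (σ.injective h))
    · intro u huT hne
      rw [if_neg]
      intro h
      exact absurd (h u0 hu0T (fun h' => hne h'.symm)) (not_lt.2 (hu0 u huT))
  -- by symmetry, each u ∈ T is equally likely to be the maximum
  have step2 : ∀ u ∈ T,
      (∑ σ : β ≃ Fin m, (if ∀ v ∈ T, v ≠ u → σ v < σ u then (1 : ℝ) else 0))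
        = ∑ σ : β ≃ Fin m, (if ∀ v ∈ T, v ≠ emax → σ v < σ emax then (1 : ℝ) else 0) := by
    intro u huT
    have hswapT : ∀ v ∈ T, Equiv.swap u emax v ∈ T := by
      intro v hv
      rcases eq_or_ne v u with rfl | hvu
      · rw [Equiv.swap_apply_left, hT]; exact mem_insert_self emax t
      rcases eq_or_ne v emax with rfl | hvemax
      · rw [Equiv.swap_apply_right]; exact huT
      · rwa [Equiv.swap_apply_of_ne_of_ne hvu hvemax]
    have hbij : Function.Bijective
        (fun σ : β ≃ Fin m => (Equiv.swap u emax).trans σ) := by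
      constructor
      · intro a b hab
        have h2 : ∀ v, a v = b v := by
          intro v
          have := congrArg (fun s : β ≃ Fin m => s ((Equiv.swap u emax) v)) hab
          simpa [Equiv.swap_apply_self] using this
        exact Equiv.coe_fn_injective (funext h2)
      · intro σ
        refine ⟨(Equiv.swap u emax).trans σ, ?_⟩
        apply Equiv.coe_fn_injective
        funext v
        simp [Equiv.swap_apply_self]
    refine Fintype.sum_bijective _ hbij _ _ ?_
    intro σ
    have key : (∀ v ∈ T, v ≠ u → σ v < σ u) ↔
        (∀ v ∈ T, v ≠ emax → ((Equiv.swap u emax).trans σ) v < ((Equiv.swap u emax).trans σ) emax) := by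
      constructor
      · intro h v hvT hvemax
        simp only [Equiv.trans_apply, Equiv.swap_apply_right]
        refine h _ (hswapT v hvT) ?_
        intro hcontra
        apply hvemax
        have := congrArg (Equiv.swap u emax) hcontra
        simpa [Equiv.swap_apply_left] using this
      · intro h v hvT hvu
        have hv' : Equiv.swap u emax v ∈ T := hswapT v hvT
        have hv'' : Equiv.swap u emax v ≠ emax := by
          intro hcontra
          apply hvu
          have := congrArg (Equiv.swap u emax) hcontra
          simpa [Equiv.swap_apply_right] using this
        have := h _ hv' hv''
        simpa [Equiv.swap_apply_right] using this
    exact if_congr key rfl rfl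
  -- put it together
  have hcalc : (Fintype.card (β ≃ Fin m) : ℝ)
      = (T.card : ℝ) * ∑ σ : β ≃ Fin m, (if ∀ v ∈ T, v ≠ emax → σ v < σ emax then (1 : ℝ) else 0) := by
    calc (Fintype.card (β ≃ Fin m) : ℝ) = ∑ _σ : β ≃ Fin m, (1 : ℝ) := by simp
      _ = ∑ σ : β ≃ Fin m, ∑ u ∈ T, (if ∀ v ∈ T, v ≠ u → σ v < σ u then (1 : ℝ) else 0) := by
          exact Finset.sum_congr rfl fun σ _ => (step1 σ).symm
      _ = ∑ u ∈ T, ∑ σ : β ≃ Fin m, (if ∀ v ∈ T, v ≠ u → σ v < σ u then (1 : ℝ) else 0) :=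
          Finset.sum_comm
      _ = ∑ _u ∈ T, ∑ σ : β ≃ Fin m, (if ∀ v ∈ T, v ≠ emax → σ v < σ emax then (1 : ℝ) else 0) :=
          Finset.sum_congr rfl step2
      _ = _ := by rw [Finset.sum_const, nsmul_eq_mul]
  have hcond : ∀ σ : β ≃ Fin m,
      (∀ v ∈ T, v ≠ emax → σ v < σ emax) ↔ (∀ f ∈ t, σ f < σ emax) := by
    intro σ
    constructor
    · intro h f hf
      exact h f (mem_insert_of_mem hf) (fun hc => hemax (hc ▸ hf))
    · intro h v hv hvemax
      rcases mem_insert.1 hv with rfl | hv'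
      · exact absurd rfl hvemax
      · exact h v hv'
  have hTcard : (T.card : ℝ) = (t.card : ℝ) + 1 := by
    rw [hT, card_insert_of_notMem hemax]; push_cast; ring
  rw [hcalc, hTcard]
  congr 1
  exact Finset.sum_congr rfl fun σ _ => if_congr (hcond σ).symm rfl rfl

/-- The "continuous form" claim in the proof of Lemma `prob-probed-random`:
for a finite set `F`, an element `e ∉ F`, and probabilities `p f ∈ [0,1]`,
the expectation over a uniformly random linear ordering `σ` of `F ∪ {e}`
(modelled as a uniformly random bijection to `Fin (|F|+1)`) of
`∏_{f ∈ F, σ f < σ e} (1 - p f)` equals `∫_0^1 ∏_{f ∈ F} (1 - x·p f) dx`. -/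
theorem stmt_2 {α : Type*} [DecidableEq α] (F : Finset α) (e : α) (he : e ∉ F)
    (p : α → ℝ) (hp : ∀ f ∈ F, 0 ≤ p f ∧ p f ≤ 1) :
    (∑ σ : {x // x ∈ insert e F} ≃ Fin (F.card + 1),
        ∏ f ∈ F.attach,
          (if σ ⟨f.1, Finset.mem_insert_of_mem f.2⟩ <
               σ ⟨e, Finset.mem_insert_self e F⟩
           then (1 - p f.1) else 1))
      / (Fintype.card ({x // x ∈ insert e F} ≃ Fin (F.card + 1)) : ℝ)
    = ∫ x in (0:ℝ)..1, ∏ f ∈ F, (1 - x * p f) := by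
  classical
  set β := {x // x ∈ insert e F}
  set m := F.card + 1 with hm
  set emax : β := ⟨e, Finset.mem_insert_self e F⟩ with hemax
  set ι : {x // x ∈ F} → β := fun f => ⟨f.1, Finset.mem_insert_of_mem f.2⟩ with hι
  have hιinj : Function.Injective ι := fun a b hab => Subtype.ext (congrArg (fun z : β => z.1) hab)
  have hcardβ : Fintype.card β = m := by
    simp [β, Fintype.card_coe, card_insert_of_notMem he, hm]
  have hN : (0 : ℝ) < Fintype.card (β ≃ Fin m) := by
    have : Nonempty (β ≃ Fin m) := ⟨Fintype.equivFinOfCardEq hcardβ⟩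
    exact_mod_cast Fintype.card_pos
  -- Expand each product over subsets
  have expand : ∀ σ : β ≃ Fin m,
      (∏ f ∈ F.attach, (if σ (ι f) < σ emax then (1 - p f.1) else 1))
        = ∑ t ∈ F.attach.powerset,
            (if ∀ f ∈ t, σ (ι f) < σ emax then (1 : ℝ) else 0) * ∏ f ∈ t, (-p f.1) := by
    intro σ
    have h1 : ∀ f : {x // x ∈ F},
        (if σ (ι f) < σ emax then (1 - p f.1) else 1)
          = (if σ (ι f) < σ emax then (-p f.1) else 0) + 1 := by
      intro f; split_ifs <;> ring
    calc (∏ f ∈ F.attach, (if σ (ι f) < σ emax then (1 - p f.1) else 1))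
        = ∏ f ∈ F.attach, ((if σ (ι f) < σ emax then (-p f.1) else 0) + 1) :=
          Finset.prod_congr rfl fun f _ => h1 f
      _ = ∑ t ∈ F.attach.powerset,
            (∏ f ∈ t, (if σ (ι f) < σ emax then (-p f.1) else 0)) * ∏ _f ∈ F.attach \ t, (1:ℝ) :=
          Finset.prod_add _ _ _
      _ = _ := by
          refine Finset.sum_congr rfl fun t _ => ?_
          rw [Finset.prod_const_one, mul_one, Finset.prod_ite_zero]
          split_ifs <;> simp
  -- per subset count
  have count : ∀ t ∈ F.attach.powerset,
      (∑ σ : β ≃ Fin m, (if ∀ f ∈ t, σ (ι f) < σ emax then (1 : ℝ) else 0))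
        = (Fintype.card (β ≃ Fin m) : ℝ) / (t.card + 1) := by
    intro t _
    have hmap : emax ∉ t.map ⟨ι, hιinj⟩ := by
      intro hc
      rcases Finset.mem_map.1 hc with ⟨f, _, hfe⟩
      have hfeq : (f : α) = e := congrArg (fun z : β => z.1) hfe
      exact he (hfeq ▸ f.2)
    have := count_precede m (t.map ⟨ι, hιinj⟩) emax hmap
    rw [Finset.card_map] at this
    have hiff : ∀ σ : β ≃ Fin m,
        (∀ f ∈ t.map ⟨ι, hιinj⟩, σ f < σ emax) ↔ (∀ f ∈ t, σ (ι f) < σ emax) := by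
      intro σ
      constructor
      · intro h f hf
        exact h (ι f) (Finset.mem_map_of_mem _ hf)
      · intro h f hf
        rcases Finset.mem_map.1 hf with ⟨g, hg, rfl⟩
        exact h g hg
    have hsum : (∑ σ : β ≃ Fin m, (if ∀ f ∈ t.map ⟨ι, hιinj⟩, σ f < σ emax then (1:ℝ) else 0))
        = ∑ σ : β ≃ Fin m, (if ∀ f ∈ t, σ (ι f) < σ emax then (1:ℝ) else 0) :=
      Finset.sum_congr rfl fun σ _ => if_congr (hiff σ) rfl rfl
    rw [hsum] at this
    have hpos : ((t.card : ℝ) + 1) ≠ 0 := by positivity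
    rw [eq_div_iff hpos]
    linear_combination this
  -- LHS computation
  have hLHS : (∑ σ : β ≃ Fin m,
        ∏ f ∈ F.attach, (if σ (ι f) < σ emax then (1 - p f.1) else 1))
          / (Fintype.card (β ≃ Fin m) : ℝ)
      = ∑ t ∈ F.attach.powerset, (∏ f ∈ t, (-p f.1)) / (t.card + 1) := by
    rw [Finset.sum_congr rfl fun σ _ => expand σ, Finset.sum_comm]
    rw [Finset.sum_div]
    refine Finset.sum_congr rfl fun t ht => ?_
    rw [← Finset.sum_mul, count t ht]
    have hpos : ((t.card : ℝ) + 1) ≠ 0 := by positivity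
    have hN' : (Fintype.card (β ≃ Fin m) : ℝ) ≠ 0 := ne_of_gt hN
    field_simp
  -- RHS computation
  have hRHS : (∫ x in (0:ℝ)..1, ∏ f ∈ F, (1 - x * p f))
      = ∑ t ∈ F.attach.powerset, (∏ f ∈ t, (-p f.1)) / (t.card + 1) := by
    have hexp : ∀ x : ℝ, (∏ f ∈ F, (1 - x * p f))
        = ∑ t ∈ F.attach.powerset, x ^ t.card * ∏ f ∈ t, (-p f.1) := by
      intro x
      rw [← Finset.prod_attach F (fun f => 1 - x * p f)]
      calc (∏ f ∈ F.attach, (1 - x * p f.1))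
          = ∏ f ∈ F.attach, (x * (-p f.1) + 1) := Finset.prod_congr rfl fun f _ => by ring
        _ = ∑ t ∈ F.attach.powerset,
              (∏ f ∈ t, (x * (-p f.1))) * ∏ _f ∈ F.attach \ t, (1:ℝ) :=
            Finset.prod_add _ _ _
        _ = _ := by
            refine Finset.sum_congr rfl fun t _ => ?_
            rw [Finset.prod_const_one, mul_one, Finset.prod_mul_distrib, Finset.prod_const]
    rw [intervalIntegral.integral_congr (fun x _ => hexp x)]
    rw [intervalIntegral.integral_finset_sum]
    · refine Finset.sum_congr rfl fun t _ => ?_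
      rw [intervalIntegral.integral_mul_const, integral_pow]
      rw [one_pow, zero_pow (Nat.succ_ne_zero _), sub_zero, div_mul_eq_mul_div, one_mul]
    · intro t _
      exact ((continuous_pow t.card).mul continuous_const).intervalIntegrable _ _
  rw [hRHS]
  exact hLHS
end

section
/- Let r > 0 and 0 < p ≤ 1 be real numbers, let F be a finite set and p : F → [0, p] a function with ∑_{f ∈ F} p_f ≤ r. Then ∫_0^1 ∏_{f ∈ F} (1 - x·p_f) dx ≥ ∫_0^1 (1 - x·p)^{⌊r/p⌋} · (1 - x·(r - ⌊r/p⌋·p)) dx, where ⌊·⌋ denotes the floor function. -/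
open Finset

noncomputable def etaFn (s q : ℝ) : ℝ :=
  (1 - q) ^ (⌊s / q⌋₊) * (1 - (s - (⌊s / q⌋₊ : ℝ) * q))

lemma floor_bounds {s q : ℝ} (hs : 0 ≤ s) (hq : 0 < q) :
    (⌊s / q⌋₊ : ℝ) * q ≤ s ∧ s < ((⌊s / q⌋₊ : ℝ) + 1) * q := by
  constructor
  · have h := Nat.floor_le (div_nonneg hs hq.le)
    have := div_mul_cancel₀ s hq.ne'
    nlinarith
  · have h := Nat.lt_floor_add_one (s / q)
    have := div_mul_cancel₀ s hq.ne'
    nlinarith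

lemma eta_nonneg {s q : ℝ} (hs : 0 ≤ s) (hq : 0 < q) (hq1 : q ≤ 1) :
    0 ≤ etaFn s q := by
  obtain ⟨h1, h2⟩ := floor_bounds hs hq
  have hpow : (0:ℝ) ≤ (1 - q) ^ (⌊s / q⌋₊) := pow_nonneg (by linarith) _
  have : 0 ≤ 1 - (s - (⌊s / q⌋₊ : ℝ) * q) := by nlinarith
  exact mul_nonneg hpow this

lemma eta_step {t a q : ℝ} (ht : 0 ≤ t) (ha : 0 ≤ a) (haq : a ≤ q)
    (hq : 0 < q) (hq1 : q ≤ 1) :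
    etaFn (t + a) q ≤ (1 - a) * etaFn t q := by
  obtain ⟨h1, h2⟩ := floor_bounds ht hq
  set k := ⌊t / q⌋₊ with hk
  set ρ := t - (k : ℝ) * q with hρ
  have hρ0 : 0 ≤ ρ := by simp [hρ]; linarith
  have hρq : ρ < q := by simp [hρ]; nlinarith
  have hpow : (0:ℝ) ≤ (1 - q) ^ k := pow_nonneg (by linarith) _
  have hta : 0 ≤ (t + a) / q := div_nonneg (by linarith) hq.le
  by_cases hcase : ρ + a < q
  · have hfloor : ⌊(t + a) / q⌋₊ = k := by
      rw [Nat.floor_eq_iff (by positivity)]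
      rw [le_div_iff₀ hq, div_lt_iff₀ hq]
      constructor
      · nlinarith
      · push_cast; nlinarith
    unfold etaFn
    rw [hfloor]
    have key : 1 - (t + a - (k : ℝ) * q) ≤ (1 - a) * (1 - (t - (k : ℝ) * q)) := by
      nlinarith
    calc (1 - q) ^ k * (1 - (t + a - (k : ℝ) * q))
        ≤ (1 - q) ^ k * ((1 - a) * (1 - (t - (k : ℝ) * q))) :=
          mul_le_mul_of_nonneg_left key hpow
      _ = (1 - a) * ((1 - q) ^ k * (1 - (t - (k : ℝ) * q))) := by ring
  · push_neg at hcase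
    have hfloor : ⌊(t + a) / q⌋₊ = k + 1 := by
      rw [Nat.floor_eq_iff (by positivity)]
      rw [le_div_iff₀ hq, div_lt_iff₀ hq]
      constructor
      · push_cast; nlinarith
      · push_cast; nlinarith
    unfold etaFn
    rw [hfloor]
    have key : (1 - q) * (1 - (t + a - ((k : ℝ) + 1) * q)) ≤
        (1 - a) * (1 - (t - (k : ℝ) * q)) := by
      nlinarith [mul_nonneg (by linarith : (0:ℝ) ≤ q - a) (by linarith : (0:ℝ) ≤ q - ρ)]
    push_cast
    calc (1 - q) ^ (k + 1) * (1 - (t + a - ((k : ℝ) + 1) * q))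
        = (1 - q) ^ k * ((1 - q) * (1 - (t + a - ((k : ℝ) + 1) * q))) := by ring
      _ ≤ (1 - q) ^ k * ((1 - a) * (1 - (t - (k : ℝ) * q))) :=
          mul_le_mul_of_nonneg_left key hpow
      _ = (1 - a) * ((1 - q) ^ k * (1 - (t - (k : ℝ) * q))) := by ring

lemma eta_anti_aux {q : ℝ} (hq : 0 < q) (hq1 : q ≤ 1) :
    ∀ n : ℕ, ∀ s s' : ℝ, 0 ≤ s → s ≤ s' → s' ≤ s + n * q → etaFn s' q ≤ etaFn s q := by
  intro n
  induction n with
  | zero => intro s s' hs hss h; simp at h; have : s = s' := le_antisymm hss h; rw [this]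
  | succ n ih =>
    intro s s' hs hss h
    by_cases hgap : s' - s ≤ q
    · have heq : s' = s + (s' - s) := by ring
      rw [heq]
      calc etaFn (s + (s' - s)) q ≤ (1 - (s' - s)) * etaFn s q :=
            eta_step hs (by linarith) hgap hq hq1
        _ ≤ 1 * etaFn s q := by
            have := eta_nonneg hs hq hq1
            nlinarith
        _ = etaFn s q := one_mul _
    · push_neg at hgap
      have h1 : s ≤ s' - q := by linarith
      have h2 : s' - q ≤ s + n * q := by push_cast at h; linarith
      have h0 : 0 ≤ s' - q := by linarith
      calc etaFn s' q = etaFn ((s' - q) + q) q := by ring_nf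
        _ ≤ (1 - q) * etaFn (s' - q) q := eta_step h0 hq.le le_rfl hq hq1
        _ ≤ 1 * etaFn (s' - q) q := by
            have := eta_nonneg h0 hq hq1
            nlinarith
        _ = etaFn (s' - q) q := one_mul _
        _ ≤ etaFn s q := ih s (s' - q) hs h1 h2

lemma eta_anti {s s' q : ℝ} (hq : 0 < q) (hq1 : q ≤ 1) (hs : 0 ≤ s) (hss : s ≤ s') :
    etaFn s' q ≤ etaFn s q := by
  have hc : s' - s ≤ (⌈(s' - s) / q⌉₊ : ℝ) * q := by
    have := Nat.le_ceil ((s' - s) / q)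
    have := div_mul_cancel₀ (s' - s) hq.ne'
    nlinarith
  exact eta_anti_aux hq hq1 ⌈(s' - s) / q⌉₊ s s' hs hss (by linarith)

lemma prod_ge_eta {α : Type*} (F : Finset α) (q : ℝ) (hq : 0 < q) (hq1 : q ≤ 1)
    (a : α → ℝ) (ha : ∀ f ∈ F, 0 ≤ a f ∧ a f ≤ q) :
    etaFn (∑ f ∈ F, a f) q ≤ ∏ f ∈ F, (1 - a f) := by
  induction F using Finset.cons_induction with
  | empty => simp [etaFn, Nat.floor_eq_zero.mpr, zero_div, Nat.floor_zero]
  | cons f s hf ih =>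
    rw [Finset.sum_cons, Finset.prod_cons]
    have hmem := ha f (Finset.mem_cons_self f s)
    have ht : 0 ≤ ∑ g ∈ s, a g :=
      Finset.sum_nonneg fun g hg => (ha g (Finset.mem_cons_of_mem hg)).1
    calc etaFn (a f + ∑ g ∈ s, a g) q
        = etaFn ((∑ g ∈ s, a g) + a f) q := by rw [add_comm]
      _ ≤ (1 - a f) * etaFn (∑ g ∈ s, a g) q :=
          eta_step ht hmem.1 hmem.2 hq hq1
      _ ≤ (1 - a f) * ∏ g ∈ s, (1 - a g) := by
          apply mul_le_mul_of_nonneg_left _ (by linarith [hmem.2])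
          exact ih fun g hg => ha g (Finset.mem_cons_of_mem hg)

/-- Lemma `prob-probed-random` in integral form: if `0 ≤ q f ≤ p` for all
`f ∈ F` and `∑_{f ∈ F} q f ≤ r`, then
`∫_0^1 ∏_{f ∈ F} (1 - x·q f) dx ≥ ∫_0^1 (1-xp)^⌊r/p⌋ (1 - x(r - ⌊r/p⌋·p)) dx`. -/
theorem stmt_3 {α : Type*} (F : Finset α) (r p : ℝ)
    (hr : 0 < r) (hp0 : 0 < p) (hp1 : p ≤ 1)
    (q : α → ℝ) (hq : ∀ f ∈ F, 0 ≤ q f ∧ q f ≤ p)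
    (hsum : ∑ f ∈ F, q f ≤ r) :
    (∫ x in (0:ℝ)..1, ∏ f ∈ F, (1 - x * q f)) ≥
      ∫ x in (0:ℝ)..1,
        (1 - x * p) ^ (⌊r / p⌋₊) * (1 - x * (r - (⌊r / p⌋₊ : ℝ) * p)) := by
  rw [ge_iff_le]
  have hcont1 : Continuous fun x : ℝ =>
      (1 - x * p) ^ (⌊r / p⌋₊) * (1 - x * (r - (⌊r / p⌋₊ : ℝ) * p)) := by
    continuity
  have hcont2 : Continuous fun x : ℝ => ∏ f ∈ F, (1 - x * q f) := by
    apply continuous_finset_prod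
    intro f _
    continuity
  apply intervalIntegral.integral_mono_on (by norm_num : (0:ℝ) ≤ 1)
    (hcont1.intervalIntegrable 0 1) (hcont2.intervalIntegrable 0 1)
  intro x hx
  obtain ⟨hx0, hx1⟩ := hx
  rcases eq_or_lt_of_le hx0 with heq | hxpos
  · simp [← heq]
  · -- x > 0
    have hxp : 0 < x * p := mul_pos hxpos hp0
    have hxp1 : x * p ≤ 1 := by nlinarith
    have hfloor : ⌊(x * r) / (x * p)⌋₊ = ⌊r / p⌋₊ := by
      rw [mul_div_mul_left r p hxpos.ne']
    have heta : etaFn (x * r) (x * p) =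
        (1 - x * p) ^ (⌊r / p⌋₊) * (1 - x * (r - (⌊r / p⌋₊ : ℝ) * p)) := by
      unfold etaFn
      rw [hfloor]
      ring_nf
    rw [← heta]
    have hsum' : ∑ f ∈ F, x * q f ≤ x * r := by
      rw [← Finset.mul_sum]
      exact mul_le_mul_of_nonneg_left hsum hxpos.le
    have hsnn : 0 ≤ ∑ f ∈ F, x * q f :=
      Finset.sum_nonneg fun f hf => mul_nonneg hxpos.le (hq f hf).1
    calc etaFn (x * r) (x * p) ≤ etaFn (∑ f ∈ F, x * q f) (x * p) :=
          eta_anti hxp hxp1 hsnn hsum'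
      _ ≤ ∏ f ∈ F, (1 - x * q f) := by
          apply prod_ge_eta F (x * p) hxp hxp1
          intro f hf
          exact ⟨mul_nonneg hxpos.le (hq f hf).1,
                 mul_le_mul_of_nonneg_left (hq f hf).2 hxpos.le⟩
end

section
/- Let F be a finite set, p : F → [0,1], and let G be a partition of F into blocks each of size at most 2. Then ∫_0^1 ∏_{g ∈ G} ( x·∏_{f ∈ g}(1-p_f) + (1-x) ) dx ≥ ∫_0^1 ∏_{f ∈ F} (1 - x·p_f) dx. -/
open Finset

/-- Lemma `decoupling` in integral form: if the finite set `F` is partitioned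
into blocks `G`, each nonempty of size at most 2, and `p f ∈ [0,1]` on `F`, then
`∫_0^1 ∏_{g ∈ G} (x·∏_{f ∈ g}(1-p f) + (1-x)) dx ≥ ∫_0^1 ∏_{f ∈ F} (1-x·p f) dx`. -/
theorem stmt_5 {α : Type*} [DecidableEq α] (F : Finset α) (G : Finset (Finset α))
    (p : α → ℝ) (hp : ∀ f ∈ F, 0 ≤ p f ∧ p f ≤ 1)
    (hcard : ∀ g ∈ G, g.card ≤ 2) (hne : ∀ g ∈ G, g.Nonempty)
    (hdisj : (G : Set (Finset α)).Pairwise fun g₁ g₂ => Disjoint g₁ g₂)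
    (hcover : G.biUnion id = F) :
    (∫ x in (0:ℝ)..1, ∏ g ∈ G, (x * ∏ f ∈ g, (1 - p f) + (1 - x))) ≥
      ∫ x in (0:ℝ)..1, ∏ f ∈ F, (1 - x * p f) := by
  have key : ∀ x ∈ Set.Icc (0:ℝ) 1,
      ∏ f ∈ F, (1 - x * p f) ≤ ∏ g ∈ G, (x * ∏ f ∈ g, (1 - p f) + (1 - x)) := by
    intro x hx
    obtain ⟨hx0, hx1⟩ := hx
    have hrw : ∏ f ∈ F, (1 - x * p f) = ∏ g ∈ G, ∏ f ∈ g, (1 - x * p f) := by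
      rw [← hcover]
      exact Finset.prod_biUnion (fun g₁ h₁ g₂ h₂ hne' => hdisj h₁ h₂ hne')
    rw [hrw]
    have hmem : ∀ g ∈ G, ∀ f ∈ g, 0 ≤ p f ∧ p f ≤ 1 := by
      intro g hg f hf
      exact hp f (by rw [← hcover]; exact Finset.mem_biUnion.2 ⟨g, hg, hf⟩)
    apply Finset.prod_le_prod
    · intro g hg
      apply Finset.prod_nonneg
      intro f hf
      have hpf := hmem g hg f hf
      nlinarith [hpf.1, hpf.2]
    · intro g hg
      rcases Nat.lt_or_ge g.card 2 with h | h
      · have hc1 : g.card = 1 := by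
          have := Finset.card_pos.mpr (hne g hg); omega
        obtain ⟨a, ha⟩ := Finset.card_eq_one.mp hc1
        subst ha
        simp only [Finset.prod_singleton]
        nlinarith [hmem {a} hg a (Finset.mem_singleton_self a)]
      · have hc2 : g.card = 2 := le_antisymm (hcard g hg) h
        obtain ⟨a, b, hab, hgab⟩ := Finset.card_eq_two.mp hc2
        subst hgab
        rw [Finset.prod_insert (by simp [hab]), Finset.prod_singleton,
            Finset.prod_insert (by simp [hab]), Finset.prod_singleton]
        have ha' := hmem {a, b} hg a (by simp)
        have hb' := hmem {a, b} hg b (by simp)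
        nlinarith [mul_nonneg (mul_nonneg hx0 (sub_nonneg.2 hx1))
          (mul_nonneg ha'.1 hb'.1)]
  have hcL : Continuous fun x : ℝ => ∏ g ∈ G, (x * ∏ f ∈ g, (1 - p f) + (1 - x)) := by
    apply continuous_finset_prod
    intro g _
    fun_prop
  have hcR : Continuous fun x : ℝ => ∏ f ∈ F, (1 - x * p f) := by
    apply continuous_finset_prod
    intro f _
    fun_prop
  exact intervalIntegral.integral_mono_on (by norm_num)
    (hcR.intervalIntegrable _ _) (hcL.intervalIntegrable _ _) key
end

section
/- For every fixed p with 0 < p ≤ 1, the function r ↦ ρ(r,p) is convex and nonincreasing on [0, ∞). -/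
/-- `ρ(r,p) = ∫_0^1 (1 - x·p)^⌊r/p⌋ · (1 - x·(r - ⌊r/p⌋·p)) dx`. -/
noncomputable def rho (r p : ℝ) : ℝ :=
  ∫ x in (0:ℝ)..1, (1 - x * p) ^ (⌊r / p⌋₊) * (1 - x * (r - (⌊r / p⌋₊ : ℝ) * p))

namespace Stmt8Aux

/-- The affine pieces. -/
def h (x p : ℝ) (t : ℕ) (r : ℝ) : ℝ := (1 - x * p) ^ t * (1 - x * (r - (t : ℝ) * p))

lemma h_intable (p : ℝ) (t : ℕ) (r : ℝ) :
    IntervalIntegrable (fun x => h x p t r) MeasureTheory.volume 0 1 := by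
  apply Continuous.intervalIntegrable
  unfold h; fun_prop

lemma rho_eq (r p : ℝ) : rho r p = ∫ x in (0:ℝ)..1, h x p (⌊r / p⌋₊) r := rfl

lemma step (x p : ℝ) (t : ℕ) (r : ℝ) :
    h x p (t + 1) r - h x p t r = (1 - x * p) ^ t * (x ^ 2 * p * (r - ((t : ℝ) + 1) * p)) := by
  simp only [h, pow_succ]; push_cast; ring

lemma h_le_floor {x p r : ℝ} (hx0 : 0 ≤ x) (hx1 : x ≤ 1) (hp0 : 0 < p) (hp1 : p ≤ 1)
    (hr : 0 ≤ r) (t : ℕ) : h x p t r ≤ h x p (⌊r / p⌋₊) r := by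
  set T := ⌊r / p⌋₊ with hT
  have hc : 0 ≤ 1 - x * p := by nlinarith
  have hTp : (T : ℝ) * p ≤ r := by
    have h1 : (T : ℝ) ≤ r / p := Nat.floor_le (div_nonneg hr hp0.le)
    have : (T : ℝ) * p ≤ (r / p) * p := by nlinarith
    rwa [div_mul_cancel₀ r hp0.ne'] at this
  have hrT : r < ((T : ℝ) + 1) * p := by
    have h1 : r / p < (T : ℝ) + 1 := Nat.lt_floor_add_one (r / p)
    have : (r / p) * p < ((T : ℝ) + 1) * p := by nlinarith
    rwa [div_mul_cancel₀ r hp0.ne'] at this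
  rcases le_or_gt t T with hle | hlt
  · -- climb up from t to T
    have up : ∀ b : ℕ, b ≤ T → ∀ a : ℕ, a ≤ b → h x p a r ≤ h x p b r := by
      intro b
      induction b with
      | zero =>
        intro _ a ha
        have : a = 0 := Nat.le_zero.mp ha
        simp [this]
      | succ n ih =>
        intro hbT a ha
        rcases Nat.eq_or_lt_of_le ha with rfl | h'
        · exact le_rfl
        · have h1 : h x p a r ≤ h x p n r :=
            ih (le_trans (Nat.le_succ n) hbT) a (Nat.lt_succ_iff.mp h')
          have hnp : ((n : ℝ) + 1) * p ≤ r := by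
            have hcast : (n : ℝ) + 1 ≤ (T : ℝ) := by exact_mod_cast hbT
            nlinarith
          have h2 : h x p n r ≤ h x p (n + 1) r := by
            have hs := step x p n r
            have hnn : 0 ≤ (1 - x * p) ^ n * (x ^ 2 * p * (r - ((n : ℝ) + 1) * p)) := by
              apply mul_nonneg (pow_nonneg hc n)
              apply mul_nonneg (mul_nonneg (sq_nonneg x) hp0.le)
              linarith
            linarith
          exact le_trans h1 h2
    exact up T le_rfl t hle
  · -- descend from t down to T
    obtain ⟨d, rfl⟩ : ∃ d, t = T + d := ⟨t - T, (Nat.add_sub_cancel' hlt.le).symm⟩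
    clear hlt
    induction d with
    | zero => simp
    | succ n ih =>
      have h2 : h x p (T + n + 1) r ≤ h x p (T + n) r := by
        have hs := step x p (T + n) r
        have hle2 : r - ((T : ℝ) + n + 1) * p ≤ 0 := by
          have : ((T : ℝ) + 1) * p ≤ ((T : ℝ) + (n : ℝ) + 1) * p := by nlinarith [Nat.cast_nonneg (α := ℝ) n]
          linarith
        have hnp : (1 - x * p) ^ (T + n) * (x ^ 2 * p * (r - ((T : ℝ) + (n : ℝ) + 1) * p)) ≤ 0 := by
          apply mul_nonpos_of_nonneg_of_nonpos (pow_nonneg hc _)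
          apply mul_nonpos_of_nonneg_of_nonpos (mul_nonneg (sq_nonneg x) hp0.le)
          push_cast at hle2 ⊢; linarith
        push_cast at hs
        have : h x p (T + n + 1) r - h x p (T + n) r ≤ 0 := by
          rw [hs]; exact hnp
        linarith
      calc h x p (T + (n + 1)) r = h x p (T + n + 1) r := by ring_nf
      _ ≤ h x p (T + n) r := h2
      _ ≤ h x p T r := ih

lemma h_affine {a b : ℝ} (hab : a + b = 1) (x p : ℝ) (t : ℕ) (r1 r2 : ℝ) :
    h x p t (a * r1 + b * r2) = a * h x p t r1 + b * h x p t r2 := by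
  have hb : b = 1 - a := by linarith
  subst hb; unfold h; ring

lemma h_mono {x p r1 r2 : ℝ} (hx0 : 0 ≤ x) (hx1 : x ≤ 1) (hp0 : 0 < p) (hp1 : p ≤ 1)
    (t : ℕ) (h12 : r1 ≤ r2) : h x p t r2 ≤ h x p t r1 := by
  have hc : 0 ≤ 1 - x * p := by nlinarith
  have key : h x p t r1 - h x p t r2 = (1 - x * p) ^ t * (x * (r2 - r1)) := by
    unfold h; ring
  have : 0 ≤ (1 - x * p) ^ t * (x * (r2 - r1)) :=
    mul_nonneg (pow_nonneg hc t) (mul_nonneg hx0 (by linarith))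
  linarith

end Stmt8Aux

open Stmt8Aux in
/-- Part 1 of Lemma `prob-probing`: for fixed `0 < p ≤ 1`, the function
`r ↦ ρ(r,p)` is convex and nonincreasing on `[0, ∞)`. -/
theorem stmt_8 (p : ℝ) (hp0 : 0 < p) (hp1 : p ≤ 1) :
    ConvexOn ℝ (Set.Ici (0:ℝ)) (fun r => rho r p) ∧
      AntitoneOn (fun r => rho r p) (Set.Ici (0:ℝ)) := by
  constructor
  · refine ⟨convex_Ici 0, ?_⟩
    intro r1 hr1 r2 hr2 a b ha hb hab
    simp only [smul_eq_mul, Set.mem_Ici] at *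
    set r := a * r1 + b * r2 with hrdef
    have hr : 0 ≤ r := add_nonneg (mul_nonneg ha hr1) (mul_nonneg hb hr2)
    set T := ⌊r / p⌋₊ with hT
    have e1 : rho r p = ∫ x in (0:ℝ)..1, (a * h x p T r1 + b * h x p T r2) := by
      rw [rho_eq]
      apply intervalIntegral.integral_congr
      intro x _
      exact h_affine hab x p T r1 r2
    have e2 : rho r p = a * (∫ x in (0:ℝ)..1, h x p T r1) + b * (∫ x in (0:ℝ)..1, h x p T r2) := by
      rw [e1, intervalIntegral.integral_add ((h_intable p T r1).const_mul a)
        ((h_intable p T r2).const_mul b), intervalIntegral.integral_const_mul,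
        intervalIntegral.integral_const_mul]
    rw [e2]
    have le1 : (∫ x in (0:ℝ)..1, h x p T r1) ≤ rho r1 p := by
      rw [rho_eq]
      apply intervalIntegral.integral_mono_on zero_le_one (h_intable p T r1) (h_intable p _ r1)
      intro x hx
      exact h_le_floor hx.1 hx.2 hp0 hp1 hr1 T
    have le2 : (∫ x in (0:ℝ)..1, h x p T r2) ≤ rho r2 p := by
      rw [rho_eq]
      apply intervalIntegral.integral_mono_on zero_le_one (h_intable p T r2) (h_intable p _ r2)
      intro x hx
      exact h_le_floor hx.1 hx.2 hp0 hp1 hr2 T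
    exact add_le_add (mul_le_mul_of_nonneg_left le1 ha) (mul_le_mul_of_nonneg_left le2 hb)
  · intro r1 hr1 r2 hr2 h12
    simp only [Set.mem_Ici] at *
    set T2 := ⌊r2 / p⌋₊ with hT2
    have le1 : rho r2 p ≤ ∫ x in (0:ℝ)..1, h x p T2 r1 := by
      rw [rho_eq]
      apply intervalIntegral.integral_mono_on zero_le_one (h_intable p T2 r2) (h_intable p T2 r1)
      intro x hx
      exact h_mono hx.1 hx.2 hp0 hp1 T2 h12
    have le2 : (∫ x in (0:ℝ)..1, h x p T2 r1) ≤ rho r1 p := by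
      rw [rho_eq]
      apply intervalIntegral.integral_mono_on zero_le_one (h_intable p T2 r1) (h_intable p _ r1)
      intro x hx
      exact h_le_floor hx.1 hx.2 hp0 hp1 hr1 T2
    exact le_trans le1 le2
end

section
/- For every r > 0 and 0 < p ≤ 1, one has ρ(r,p) ≥ (1/(r+p)) · (1 - (1-p)^{1 + r/p}) > (1/(r+p)) · (1 - e^{-r}), where (1-p)^{1+r/p} is interpreted as a real power (equal to 0 when p = 1). -/
/-- Part 2 of Lemma `prob-probing`:
`ρ(r,p) ≥ (1/(r+p))·(1 - (1-p)^{1+r/p}) > (1/(r+p))·(1 - e^{-r})`,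
where `(1-p)^{1+r/p}` is a real (rpow) power (equal to 0 when `p = 1`). -/
theorem stmt_9 (r p : ℝ) (hr : 0 < r) (hp0 : 0 < p) (hp1 : p ≤ 1) :
    rho r p ≥ (1 / (r + p)) * (1 - (1 - p) ^ (1 + r / p : ℝ)) ∧
      (1 / (r + p)) * (1 - (1 - p) ^ (1 + r / p : ℝ))
        > (1 / (r + p)) * (1 - Real.exp (-r)) := by
  set c : ℝ := r / p with hc
  have hc0 : 0 < c := div_pos hr hp0
  set n : ℕ := ⌊c⌋₊ with hn
  have hnle : (n : ℝ) ≤ c := Nat.floor_le hc0.le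
  have hltn : c < n + 1 := Nat.lt_floor_add_one c
  set t : ℝ := c - n with ht
  have ht0 : 0 ≤ t := by simp [ht]; linarith
  have ht1 : t ≤ 1 := by simp [ht]; linarith
  constructor
  · -- main integral bound
    -- compute ∫_0^1 (1 - p*x)^c dx
    have hkey : (∫ x in (0:ℝ)..1, (1 - p * x) ^ (c : ℝ))
        = (1 / (r + p)) * (1 - (1 - p) ^ (1 + c : ℝ)) := by
      have h1 : (∫ x in (0:ℝ)..1, (1 - p * x) ^ (c : ℝ))
          = p⁻¹ • ∫ x in (0:ℝ)..p, (1 - x) ^ (c : ℝ) := by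
        have := intervalIntegral.integral_comp_mul_left
          (fun u : ℝ => (1 - u) ^ (c : ℝ)) (a := 0) (b := 1) hp0.ne'
        simpa using this
      have h2 : (∫ x in (0:ℝ)..p, (1 - x) ^ (c : ℝ))
          = ∫ x in (1 - p : ℝ)..(1:ℝ), x ^ (c : ℝ) := by
        simpa using intervalIntegral.integral_comp_sub_left
          (fun x : ℝ => x ^ (c : ℝ)) 1 (a := 0) (b := p)
      rw [h1, h2, integral_rpow (Or.inl (by linarith))]
      have hrp : r + p = p * (c + 1) := by rw [hc]; field_simp <;> ring
      rw [Real.one_rpow]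
      rw [show (1 + c : ℝ) = c + 1 by ring]
      rw [smul_eq_mul, hrp]
      field_simp
    have hmono : (∫ x in (0:ℝ)..1, (1 - p * x) ^ (c : ℝ)) ≤ rho r p := by
      unfold rho
      apply intervalIntegral.integral_mono_on (by norm_num)
      · apply Continuous.intervalIntegrable
        have hcont : Continuous fun y : ℝ => y ^ (c : ℝ) := by
          rw [continuous_iff_continuousAt]
          intro y
          exact Real.continuousAt_rpow_const y c (Or.inr hc0.le)
        exact hcont.comp (by continuity)
      · apply Continuous.intervalIntegrable; continuity
      · intro x hx
        obtain ⟨hx0, hx1⟩ := hx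
        have hb0 : 0 ≤ 1 - p * x := by nlinarith
        have hb1 : 1 - p * x ≤ 1 := by nlinarith
        have hsplit : (1 - p * x) ^ (c : ℝ)
            = (1 - p * x) ^ n * (1 - p * x) ^ (t : ℝ) := by
          rw [← Real.rpow_natCast (1 - p * x) n,
            ← Real.rpow_add_of_nonneg hb0 (Nat.cast_nonneg n) ht0]
          congr 1
          simp [ht]
        have hbern : (1 - p * x) ^ (t : ℝ) ≤ 1 - x * (r - n * p) := by
          have := Real.geom_mean_le_arith_mean2_weighted (by linarith : (0:ℝ) ≤ 1 - t)
            ht0 zero_le_one hb0 (by ring)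
          rw [Real.one_rpow, one_mul, mul_one] at this
          have hrn : r - n * p = t * p := by
            rw [ht, hc]
            field_simp <;> ring
          calc (1 - p * x) ^ (t : ℝ) ≤ (1 - t) + t * (1 - p * x) := this
            _ = 1 - x * (r - n * p) := by rw [hrn]; ring
        rw [hsplit]
        have hpow : (0:ℝ) ≤ (1 - p * x) ^ n := pow_nonneg hb0 n
        calc (1 - p * x) ^ n * (1 - p * x) ^ (t : ℝ)
            ≤ (1 - p * x) ^ n * (1 - x * (r - n * p)) :=
              mul_le_mul_of_nonneg_left hbern hpow
          _ = (1 - x * p) ^ n * (1 - x * (r - (n : ℝ) * p)) := by ring_nf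
    rw [ge_iff_le, ← hkey]
    exact hmono
  · -- strict part
    have hpos : 0 < 1 / (r + p) := by positivity
    apply mul_lt_mul_of_pos_left _ hpos
    have hlt : (1 - p) ^ (1 + c : ℝ) < Real.exp (-r) := by
      rcases eq_or_lt_of_le hp1 with h1 | h1
      · rw [h1, sub_self,
          Real.zero_rpow (by positivity : (1 + c : ℝ) ≠ 0)]
        exact Real.exp_pos _
      · have hb : 0 < 1 - p := by linarith
        rw [Real.rpow_def_of_pos hb]
        apply Real.exp_lt_exp.mpr
        have hlog : Real.log (1 - p) < -p := by
          have := Real.log_lt_sub_one_of_pos hb (by linarith)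
          linarith
        have h1c : 0 < 1 + c := by linarith
        have hcp : c * p = r := by rw [hc]; field_simp
        calc Real.log (1 - p) * (1 + c) < -p * (1 + c) := by
              apply mul_lt_mul_of_pos_right hlog h1c
          _ = -p - c * p := by ring
          _ = -p - r := by rw [hcp]
          _ < -r := by linarith
    linarith
end

section
/- For every real constant c with 0 < c < 1, the function F(x) = (1 - c^x)/x is strictly convex on (0, ∞); indeed, its second derivative F''(x) = 2/x^3 + c^x · ( -2/x^3 + (2 ln c)/x^2 - (ln c)^2/x ) is strictly positive for all x > 0. -/
/-- Key inequality: for `t < 0`, `exp t * (t² - 2t + 2) < 2`. -/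
lemma stmt_10_key (t : ℝ) (ht : t < 0) : Real.exp t * (t ^ 2 - 2 * t + 2) < 2 := by
  have hg : ∀ s : ℝ, HasDerivAt (fun s : ℝ => Real.exp s * (s ^ 2 - 2 * s + 2))
      (Real.exp s * s ^ 2) s := by
    intro s
    have : HasDerivAt (𝕜 := ℝ) (F := ℝ) _ _ _ := (Real.hasDerivAt_exp s).fun_mul
      (((hasDerivAt_pow 2 s).fun_sub ((hasDerivAt_id s).const_mul 2)).add_const 2)
    convert this using 1
    all_goals simp only [id]
    ring
  have hmono : StrictMonoOn (fun s : ℝ => Real.exp s * (s ^ 2 - 2 * s + 2)) (Set.Iic 0) := by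
    apply strictMonoOn_of_deriv_pos (convex_Iic 0)
    · exact (Real.continuous_exp.mul (by continuity)).continuousOn
    · intro s hs
      rw [interior_Iic, Set.mem_Iio] at hs
      rw [(hg s).deriv]
      have : (0:ℝ) < s ^ 2 := by nlinarith
      positivity
  have := hmono (Set.mem_Iic.2 ht.le) (Set.mem_Iic.2 le_rfl) ht
  simpa using this

/-- Convexity claim from the proof of Lemma `prob-probing`: for `0 < c < 1`,
the function `F(x) = (1 - c^x)/x` is strictly convex on `(0,∞)`, and its second
derivative equals `2/x³ + c^x·(-2/x³ + 2 ln c/x² - (ln c)²/x)`, which is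
strictly positive for all `x > 0`. -/
theorem stmt_10 (c : ℝ) (hc0 : 0 < c) (hc1 : c < 1) :
    StrictConvexOn ℝ (Set.Ioi (0:ℝ)) (fun x : ℝ => (1 - c ^ x) / x) ∧
      ∀ x : ℝ, 0 < x →
        deriv (deriv (fun x : ℝ => (1 - c ^ x) / x)) x
            = 2 / x ^ 3
              + c ^ x * (-(2 / x ^ 3) + 2 * Real.log c / x ^ 2
                  - (Real.log c) ^ 2 / x) ∧
          0 < 2 / x ^ 3
              + c ^ x * (-(2 / x ^ 3) + 2 * Real.log c / x ^ 2
                  - (Real.log c) ^ 2 / x) := by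
  set L : ℝ := Real.log c with hL
  have hLneg : L < 0 := Real.log_neg hc0 hc1
  have hfun : (fun x : ℝ => (1 - c ^ x) / x)
      = fun x : ℝ => (1 - Real.exp (L * x)) / x := by
    funext x
    rw [Real.rpow_def_of_pos hc0]
  set f1 : ℝ → ℝ := fun x => (-1 - L * Real.exp (L * x) * x + Real.exp (L * x)) / x ^ 2
    with hf1
  set f2 : ℝ → ℝ := fun x => 2 / x ^ 3
      + Real.exp (L * x) * (-(2 / x ^ 3) + 2 * L / x ^ 2 - L ^ 2 / x) with hf2
  -- first derivative
  have hD1 : ∀ x : ℝ, x ≠ 0 →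
      HasDerivAt (fun x : ℝ => (1 - Real.exp (L * x)) / x) (f1 x) x := by
    intro x hx
    have he : HasDerivAt (fun x : ℝ => Real.exp (L * x)) (Real.exp (L * x) * L) x := by
      simpa using ((hasDerivAt_id x).const_mul L).exp
    have hn : HasDerivAt (fun x : ℝ => 1 - Real.exp (L * x)) (0 - Real.exp (L * x) * L) x :=
      (hasDerivAt_const x (1:ℝ)).sub he
    have : HasDerivAt (𝕜 := ℝ) (F := ℝ) _ _ _ := hn.fun_div (hasDerivAt_id x) hx
    convert this using 1
    all_goals simp only [id, hf1, mul_one]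
    ring
  -- second derivative
  have hD2 : ∀ x : ℝ, x ≠ 0 → HasDerivAt f1 (f2 x) x := by
    intro x hx
    have he : HasDerivAt (fun x : ℝ => Real.exp (L * x)) (Real.exp (L * x) * L) x := by
      simpa using ((hasDerivAt_id x).const_mul L).exp
    have hn : HasDerivAt (fun x : ℝ => -1 - L * Real.exp (L * x) * x + Real.exp (L * x))
        (-(L ^ 2 * Real.exp (L * x) * x)) x := by
      have h2 : HasDerivAt (fun x : ℝ => L * Real.exp (L * x) * x)
          (L * (Real.exp (L * x) * L) * x + L * Real.exp (L * x) * 1) x := by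
        simpa using ((he.const_mul L).fun_mul (hasDerivAt_id x))
      have : HasDerivAt (𝕜 := ℝ) (F := ℝ) _ _ _ := ((hasDerivAt_const x (-1:ℝ)).fun_sub h2).fun_add he
      convert this using 1
      ring
    have hd : HasDerivAt (fun x : ℝ => (x:ℝ) ^ 2) (2 * x) x := by
      simpa using hasDerivAt_pow 2 x
    have hx2 : (x:ℝ) ^ 2 ≠ 0 := pow_ne_zero _ hx
    have : HasDerivAt (𝕜 := ℝ) (F := ℝ) _ _ _ := hn.fun_div hd hx2
    rw [hf1, hf2]
    convert this using 1
    field_simp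
    ring
  -- deriv of f equals f1 on a neighborhood of any x > 0
  have hderiv1 : ∀ x : ℝ, 0 < x →
      deriv (fun x : ℝ => (1 - c ^ x) / x) =ᶠ[nhds x] f1 := by
    intro x hx
    filter_upwards [isOpen_Ioi.mem_nhds (Set.mem_Ioi.2 hx)] with y hy
    rw [hfun]
    exact (hD1 y (ne_of_gt hy)).deriv
  have hderiv2 : ∀ x : ℝ, 0 < x →
      deriv (deriv (fun x : ℝ => (1 - c ^ x) / x)) x = f2 x := by
    intro x hx
    rw [Filter.EventuallyEq.deriv_eq (hderiv1 x hx)]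
    exact (hD2 x (ne_of_gt hx)).deriv
  -- positivity of f2
  have hpos : ∀ x : ℝ, 0 < x → 0 < f2 x := by
    intro x hx
    have ht : L * x < 0 := mul_neg_of_neg_of_pos hLneg hx
    have hkey := stmt_10_key (L * x) ht
    have hx3 : (0:ℝ) < x ^ 3 := by positivity
    have heq : f2 x = (2 - Real.exp (L * x) * ((L * x) ^ 2 - 2 * (L * x) + 2)) / x ^ 3 := by
      rw [hf2]
      field_simp
      ring
    rw [heq]
    apply div_pos _ hx3
    linarith
  constructor
  · apply strictConvexOn_of_deriv2_pos (convex_Ioi 0)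
    · rw [hfun]
      apply ContinuousOn.div
      · exact (continuous_const.sub (Real.continuous_exp.comp (by continuity))).continuousOn
      · exact continuousOn_id
      · intro x hx; exact ne_of_gt hx
    · intro x hx
      rw [interior_Ioi] at hx
      have : (deriv^[2] (fun x : ℝ => (1 - c ^ x) / x)) x
          = deriv (deriv (fun x : ℝ => (1 - c ^ x) / x)) x := by
        simp [Function.iterate_succ, Function.comp]
      rw [this, hderiv2 x hx]
      exact hpos x hx
  · intro x hx
    have hcx : c ^ x = Real.exp (L * x) := Real.rpow_def_of_pos hc0 x
    refine ⟨?_, ?_⟩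
    · rw [hderiv2 x hx, hf2, hcx]
    · rw [hcx]
      exact hpos x hx
end

section
/- For every p with 0 < p ≤ 1, one has ρ(2,p) ≥ 1/3, with equality when p = 1 (where ρ(2,1) = ∫_0^1 (1-x)^2 dx = 1/3). -/
private lemma bern_aux (n : ℕ) (p x : ℝ) (hp0 : 0 ≤ p) (hp1 : p ≤ 1) (hx0 : 0 ≤ x)
    (hx1 : x ≤ 1) : 1 - n*p*x + (n*p - 1)*x^2 ≤ (1 - p*x)^n := by
  induction n with
  | zero => simp; nlinarith
  | succ n ih =>
    have hpx : 0 ≤ 1 - p*x := by nlinarith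
    have key : (1-p*x)^(n+1) = (1-p*x)^n * (1-p*x) := pow_succ _ _
    rcases le_or_gt 1 ((n:ℝ)*p) with h | h
    · have h2 := mul_le_mul_of_nonneg_right ih hpx
      push_cast
      nlinarith [mul_nonneg (mul_nonneg (sub_nonneg.2 hx1) (sq_nonneg x)) (mul_nonneg hp0 (sub_nonneg.2 h))]
    · have hb : 1 + (n:ℝ)*(-(p*x)) ≤ (1 - p*x)^n := by
        have := one_add_mul_le_pow (a := -(p*x)) (by nlinarith) n
        simpa [sub_eq_add_neg] using this
      have h2 := mul_le_mul_of_nonneg_right hb hpx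
      push_cast
      nlinarith [mul_nonneg (mul_nonneg (sub_nonneg.2 hp1) (by nlinarith : (0:ℝ) ≤ 1 - (n:ℝ)*p)) (sq_nonneg x)]

private lemma pointw_aux (p x : ℝ) (hp0 : 0 < p) (hp1 : p ≤ 1) (hx0 : 0 ≤ x) (hx1 : x ≤ 1) :
    (1-x)^2 ≤ (1 - x * p) ^ (⌊2 / p⌋₊) * (1 - x * (2 - (⌊2 / p⌋₊ : ℝ) * p)) := by
  set n := ⌊2/p⌋₊ with hn
  have hA2 : (n:ℝ) * p ≤ 2 := by
    have := Nat.floor_le (by positivity : (0:ℝ) ≤ 2/p)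
    rw [← hn] at this
    calc (n:ℝ)*p ≤ (2/p)*p := by nlinarith
    _ = 2 := by field_simp
  have hA1 : 2 - p < (n:ℝ) * p := by
    have := Nat.lt_floor_add_one (2/p)
    rw [← hn] at this
    have h2 : 2/p*p < ((n:ℝ)+1)*p := by nlinarith
    rw [div_mul_cancel₀] at h2; linarith; positivity
  have hK := bern_aux n p x hp0.le hp1 hx0 hx1
  have hsx : 0 ≤ 1 - x * (2 - (n:ℝ)*p) := by nlinarith
  have h2 := mul_le_mul_of_nonneg_right hK hsx
  have hxp : x * p = p * x := mul_comm _ _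
  rw [hxp]
  nlinarith [mul_nonneg (mul_nonneg (sub_nonneg.2 hx1) (sq_nonneg x))
      (mul_nonneg (by linarith : (0:ℝ) ≤ (n:ℝ)*p - 1) (by linarith : (0:ℝ) ≤ 2 - (n:ℝ)*p))]

private lemma onethird_aux : ∫ x in (0:ℝ)..1, (1-x)^2 = 1/3 := by
  rw [show (fun x => (1-x:ℝ)^2) = (fun x => ((fun y:ℝ => y^2) (1 - x))) from rfl]
  rw [intervalIntegral.integral_comp_sub_left (fun y : ℝ => y^2) 1]
  norm_num [integral_pow]

/-- Numerical claim of Theorem `non-uniform-bipartite`: `ρ(2,p) ≥ 1/3` for all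
`0 < p ≤ 1`, with equality at `p = 1`, where `ρ(2,1) = ∫_0^1 (1-x)² dx = 1/3`. -/
theorem stmt_11 (p : ℝ) (hp0 : 0 < p) (hp1 : p ≤ 1) :
    rho 2 p ≥ 1 / 3 ∧ rho 2 1 = 1 / 3 := by
  constructor
  · rw [rho, ← onethird_aux]
    apply intervalIntegral.integral_mono_on (by norm_num)
    · exact Continuous.intervalIntegrable (by continuity) _ _
    · exact Continuous.intervalIntegrable (by continuity) _ _
    · intro x hx
      exact pointw_aux p x hp0 hp1 hx.1 hx.2
  · have h : ⌊(2:ℝ)/1⌋₊ = 2 := by norm_num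
    rw [rho, h]
    rw [show (fun x:ℝ => (1 - x * 1)^2 * (1 - x * (2 - ((2:ℕ):ℝ) * 1))) = fun x:ℝ => (1-x)^2 by
      funext x; push_cast; ring]
    exact onethird_aux
end

section
/- For every p with 0 < p ≤ 1, one has ρ(1,p) ≥ 1/2, with equality when p = 1 (where ρ(1,1) = ∫_0^1 (1-x) dx = 1/2). -/
lemma rho_one_one : rho 1 1 = 1 / 2 := by
  have : rho 1 1 = ∫ x in (0:ℝ)..1, (1 - x) := by
    unfold rho
    norm_num
  rw [this, intervalIntegral.integral_sub intervalIntegrable_const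
    (intervalIntegral.intervalIntegrable_id)]
  simp [integral_id]
  norm_num

/-- Numerical claim of Theorem `non-uniform-general`: `ρ(1,p) ≥ 1/2` for all
`0 < p ≤ 1`, with equality at `p = 1`, where `ρ(1,1) = ∫_0^1 (1-x) dx = 1/2`. -/
theorem stmt_12 (p : ℝ) (hp0 : 0 < p) (hp1 : p ≤ 1) :
    rho 1 p ≥ 1 / 2 ∧ rho 1 1 = 1 / 2 := by
  refine ⟨?_, rho_one_one⟩
  unfold rho
  set n := ⌊(1:ℝ) / p⌋₊ with hn
  have hnp : (n : ℝ) * p ≤ 1 := by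
    have h1 : (n : ℝ) ≤ 1 / p := Nat.floor_le (by positivity)
    have := mul_le_mul_of_nonneg_right h1 hp0.le
    calc (n : ℝ) * p ≤ (1 / p) * p := this
      _ = 1 := by field_simp
  have hnn : (0:ℝ) ≤ (n : ℝ) := Nat.cast_nonneg n
  have key : ∀ x ∈ Set.Icc (0:ℝ) 1,
      1 - x ≤ (1 - x * p) ^ n * (1 - x * (1 - (n : ℝ) * p)) := by
    intro x hx
    obtain ⟨hx0, hx1⟩ := hx
    have hs0 : 0 ≤ 1 - (n : ℝ) * p := by linarith
    have hs1 : 1 - (n : ℝ) * p ≤ 1 := by nlinarith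
    have hxs : 0 ≤ 1 - x * (1 - (n : ℝ) * p) := by nlinarith
    have hb : 1 + (n : ℝ) * (-(x * p)) ≤ (1 + -(x * p)) ^ n :=
      one_add_mul_le_pow (by nlinarith) n
    have hb' : 1 - (n : ℝ) * (x * p) ≤ (1 - x * p) ^ n := by
      have : (1 : ℝ) + -(x * p) = 1 - x * p := by ring
      rw [this] at hb; linarith
    nlinarith [mul_le_mul_of_nonneg_right hb' hxs,
      mul_nonneg (mul_nonneg hnn (mul_nonneg hx0 hx0)) (mul_nonneg hp0.le hs0)]
  have hint1 : IntervalIntegrable (fun x : ℝ => 1 - x) MeasureTheory.volume 0 1 :=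
    (continuous_const.sub continuous_id).intervalIntegrable 0 1
  have hint2 : IntervalIntegrable
      (fun x : ℝ => (1 - x * p) ^ n * (1 - x * (1 - (n : ℝ) * p)))
      MeasureTheory.volume 0 1 := by
    apply Continuous.intervalIntegrable
    continuity
  have hmono := intervalIntegral.integral_mono_on (by norm_num : (0:ℝ) ≤ 1) hint1 hint2 key
  have hval : (∫ x in (0:ℝ)..1, (1 - x)) = 1 / 2 := by
    rw [intervalIntegral.integral_sub intervalIntegrable_const
      (intervalIntegral.intervalIntegrable_id)]
    simp [integral_id]
    norm_num
  rw [hval] at hmono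
  exact hmono
end
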